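/- arXiv:1007.3148 — 2 statements merged into one kernel-verified Lean document; each statement's English description precedes it below -/
import Mathlib

section
/- The map 𝔮 : Γ♯_Z → Γ♯_X, defined by lifting 𝔮(x,ȳ) := 𝔭(ȳ+x) = ⨆_{y_i∈ȳ}{y_i+x} diagonally to configurations via 𝔮(γ̂) := ⨆_{z∈γ̂} 𝔮(z), is measurable with respect to the cylinder σ-algebras on Γ♯_Z and Γ♯_X. -/
open MeasureTheory ENNReal ProbabilityTheory
open scoped Classical NNReal

noncomputable section

/-! ### Generic measure-theoretic helpers -/

instance {α : Type*} [MeasurableSpace α] : MeasurableSpace (Option α) :=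
  MeasurableSpace.comap (fun o : Option α => Option.elim o (Sum.inr ()) Sum.inl : Option α → α ⊕ Unit)
    inferInstance

/-- `e^{-a}` for `a ∈ [0,∞]`, valued in `[0,∞]`. -/
def expNeg (a : ℝ≥0∞) : ℝ≥0∞ := if a = ⊤ then 0 else ENNReal.ofReal (Real.exp (-a.toReal))

/-- `e^{a}` for `a ∈ [0,∞]`, valued in `[0,∞]`. -/
def expPos (a : ℝ≥0∞) : ℝ≥0∞ := if a = ⊤ then ⊤ else ENNReal.ofReal (Real.exp a.toReal)

/-- `(-log a)₊ = max(-log a, 0)` for `a ∈ [0,∞]`, valued in `[0,∞]`. -/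
def negLog (a : ℝ≥0∞) : ℝ≥0∞ := if a = 0 then ⊤ else ENNReal.ofReal (-Real.log a.toReal)

/-- `(log a)₊` for `a ∈ [0,∞]`, valued in `[0,∞]`. -/
def posLog (a : ℝ≥0∞) : ℝ≥0∞ := if a = ⊤ then ⊤ else ENNReal.ofReal (Real.log a.toReal)

/-- `e^{-e}` for an extended-real energy `e`. -/
def expNegE (e : EReal) : ℝ≥0∞ :=
  if e = ⊤ then 0 else if e = ⊥ then ⊤ else ENNReal.ofReal (Real.exp (-e.toReal))

/-! ### The space 𝔛 = ⨆_{n ∈ ℤ̄₊} Xⁿ of clusters ("marks") -/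

/-- 𝔛 := (⨆_{n∈ℤ₊} Xⁿ) ⊔ X^∞, the disjoint union of all Cartesian powers of `X`. -/
def MarkSp (X : Type*) : Type _ := (Σ n : ℕ, (Fin n → X)) ⊕ (ℕ → X)

instance {X : Type*} [MeasurableSpace X] : MeasurableSpace (MarkSp X) := by
  unfold MarkSp; infer_instance

instance {X : Type*} [TopologicalSpace X] : TopologicalSpace (MarkSp X) := by
  unfold MarkSp; infer_instance

namespace MarkSp

variable {X : Type*}

/-- The set of coordinates of a vector `yb ∈ 𝔛`. -/
def coords : MarkSp X → Set X
  | .inl ⟨_, y⟩ => Set.range y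
  | .inr y => Set.range y

/-- `Σ_{yᵢ ∈ yb} f(yᵢ)`. -/
def sumCoords (f : X → ℝ≥0∞) : MarkSp X → ℝ≥0∞
  | .inl ⟨_, y⟩ => ∑ i, f (y i)
  | .inr y => ∑' i, f (y i)

/-- `yb + x := (y₁+x, y₂+x, …)`. -/
def shift [Add X] (x : X) : MarkSp X → MarkSp X
  | .inl ⟨n, y⟩ => .inl ⟨n, fun i => y i + x⟩
  | .inr y => .inr fun i => y i + x

/-- The coordinatewise ("diagonal") action `φ̄` of a map `φ : X → X` on `𝔛`. -/
def mapCoords (φ : X → X) : MarkSp X → MarkSp X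
  | .inl ⟨n, y⟩ => .inl ⟨n, fun i => φ (y i)⟩
  | .inr y => .inr fun i => φ (y i)

/-- The "unpacking" map `𝔭(yb) = Σᵢ δ_{yᵢ}`, giving the generalized configuration of coordinates. -/
def unpack [MeasurableSpace X] : MarkSp X → Measure X
  | .inl ⟨n, y⟩ => Measure.sum fun i : Fin n => Measure.dirac (y i)
  | .inr y => Measure.sum fun i : ℕ => Measure.dirac (y i)

/-- `N_B(yb)`, the number of coordinates of `yb` lying in `B` (with multiplicity). -/
def count [MeasurableSpace X] (B : Set X) (yb : MarkSp X) : ℝ≥0∞ := unpack yb B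

end MarkSp

/-- The droplet cluster `D_B(yb) = ⋃_{yᵢ∈yb} (B - yᵢ)`. -/
def droplet {X : Type*} [Add X] (B : Set X) (yb : MarkSp X) : Set X :=
  {x | ∃ y ∈ MarkSp.coords yb, y + x ∈ B}

/-! ### Generalized configuration spaces -/

/-- The space of `ℤ̄₊`-valued measures on `Y`, carrying the *cylinder* σ-algebra; generalized
configurations (countable sums of Dirac measures) form a subset of it. -/
def Config (Y : Type*) [MeasurableSpace Y] : Type _ := Measure Y

namespace Config

variable {Y Y' : Type*} [MeasurableSpace Y] [MeasurableSpace Y']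

def mk (μ : Measure Y) : Config Y := μ

def toMeasure (γ : Config Y) : Measure Y := γ

/-- The cylinder σ-algebra, generated by the sets `{γ : γ(B) = n}`, `B` Borel, `n ∈ ℤ₊`. -/
instance : MeasurableSpace (Config Y) :=
  MeasurableSpace.generateFrom
    {A : Set (Config Y) | ∃ (B : Set Y) (n : ℕ), MeasurableSet B ∧
      A = {γ : Config Y | toMeasure γ B = (n : ℝ≥0∞)}}

/-- `⟨f, γ⟩ = Σ_{y∈γ} f(y)`. -/
def pair (f : Y → ℝ≥0∞) (γ : Config Y) : ℝ≥0∞ := ∫⁻ y, f y ∂(toMeasure γ)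

/-- `γ ∪ {y}`. -/
def addPoint (γ : Config Y) (y : Y) : Config Y := mk (toMeasure γ + Measure.dirac y)

/-- The points (atoms) of a configuration. -/
def atoms (γ : Config Y) : Set Y := {y | toMeasure γ {y} ≠ 0}

/-- The diagonal lift `γ = {y} ↦ {f(y)}` of a map `f : Y → Y'` to configurations. -/
def map (f : Y → Y') (γ : Config Y) : Config Y' := mk (Measure.map f (toMeasure γ))

/-- local finiteness: `γ(B) < ∞` for every compact `B`. -/
def IsLocallyFinite [TopologicalSpace Y] (γ : Config Y) : Prop :=
  ∀ B : Set Y, IsCompact B → toMeasure γ B < ⊤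

/-- simplicity: `γ({y}) ≤ 1` for every point `y`. -/
def IsSimple (γ : Config Y) : Prop := ∀ y : Y, toMeasure γ {y} ≤ 1

/-- `γ` is `ℤ̄₊`-valued. -/
def IsNatValued (γ : Config Y) : Prop :=
  ∀ B : Set Y, MeasurableSet B → (∃ n : ℕ, toMeasure γ B = (n : ℝ≥0∞)) ∨ toMeasure γ B = ⊤

/-- A *proper* configuration: a `ℤ̄₊`-valued measure which is locally finite and simple. -/
def IsProper [TopologicalSpace Y] (γ : Config Y) : Prop :=
  IsNatValued γ ∧ IsLocallyFinite γ ∧ IsSimple γ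

/-- `∏_{y∈γ} g(y)` for `0 ≤ g ≤ 1`, encoded as `exp(-Σ_{y∈γ}(-log g(y)))`. -/
def prod₀ (γ : Config Y) (g : Y → ℝ≥0∞) : ℝ≥0∞ := expNeg (pair (fun y => negLog (g y)) γ)

/-- `∏_{y∈γ} g(y)` for arbitrary `g ≥ 0`, encoded as
`exp(Σ_{y∈γ}(log g(y))₊) ⋅ exp(-Σ_{y∈γ}(log g(y))₋)`. -/
def prodGen (γ : Config Y) (g : Y → ℝ≥0∞) : ℝ≥0∞ :=
  expPos (pair (fun y => posLog (g y)) γ) * expNeg (pair (fun y => negLog (g y)) γ)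

end Config

/-- The measure `δ_y` for `some y`, `0` for `none`. -/
def optDirac {Y : Type*} [MeasurableSpace Y] : Option Y → Measure Y
  | none => 0
  | some y => Measure.dirac y

/-- The generalized configuration `Σᵢ δ_{p i}` determined by a countable family of points. -/
def configOf {Y : Type*} [MeasurableSpace Y] (p : ℕ → Option Y) : Config Y :=
  Config.mk (Measure.sum fun i => optDirac (p i))

/-- Generalized configurations: countable sums of Dirac measures. -/
def IsGenConfig {Y : Type*} [MeasurableSpace Y] (γ : Config Y) : Prop :=
  ∃ p : ℕ → Option Y, γ = configOf p

/-- The generalized configuration space `Γ♯_Y`, with the (trace of the) cylinder σ-algebra. -/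
def GenConfig (Y : Type*) [MeasurableSpace Y] : Type _ := {γ : Config Y // IsGenConfig γ}

instance {Y : Type*} [MeasurableSpace Y] : MeasurableSpace (GenConfig Y) :=
  MeasurableSpace.comap Subtype.val inferInstance

/-! ### Cluster point processes -/

/-- The cluster configuration `⨆_{i : p i = some x} 𝔭(ybᵢ + x)` attached to the (enumerated)
configuration `p` of centers, with cluster vectors `m i`. -/
def clusterOf {X : Type*} [MeasurableSpace X] [Add X] (p : ℕ → Option X) (m : ℕ → MarkSp X) :
    Config X :=
  Config.mk (Measure.sum fun i => (p i).elim 0 fun x => MarkSp.unpack (MarkSp.shift x (m i)))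

/-- The marked configuration `⨆_{i : p i = some x} {(x, ybᵢ)}` in `Z = X × 𝔛`. -/
def markedConfigOf {X : Type*} [MeasurableSpace X] (p : ℕ → Option X) (m : ℕ → MarkSp X) :
    Config (X × MarkSp X) :=
  Config.mk (Measure.sum fun i => (p i).elim 0 fun x => Measure.dirac (x, m i))

/-- The kernel `𝔮(x, yb) := 𝔭(yb + x)`. -/
def qKer {X : Type*} [MeasurableSpace X] [Add X] (z : X × MarkSp X) : Measure X :=
  MarkSp.unpack (MarkSp.shift z.1 z.2)

/-- The projection `𝔮 : Γ♯_Z → Γ♯_X`, `𝔮(γ̂) = ⨆_{(x,yb)∈γ̂} 𝔭(yb + x)`. -/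
def qmap {X : Type*} [MeasurableSpace X] [Add X] (γh : Config (X × MarkSp X)) : Config X :=
  Config.mk (Measure.bind (Config.toMeasure γh) qKer)

/-- The type family for the joint independence of the centers and the marks. -/
def MF (X : Type*) : Option ℕ → Type _
  | none => ℕ → Option X
  | some _ => MarkSp X

instance MFms {X : Type*} [MeasurableSpace X] : ∀ o, MeasurableSpace (MF X o)
  | none => inferInstanceAs (MeasurableSpace (ℕ → Option X))
  | some _ => inferInstanceAs (MeasurableSpace (MarkSp X))

/-- The family consisting of the center process together with all the mark variables. -/
def markFam {Ω X : Type*} (c : Ω → ℕ → Option X) (Y : ℕ → Ω → MarkSp X) :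
    ∀ o : Option ℕ, Ω → MF X o
  | none => c
  | some i => Y i

/-- `μ_cl` is the distribution of the cluster point process with center distribution `μc` and
i.i.d. clusters with distribution `η`, characterized through its Laplace functional. -/
def IsClusterMeasure {X : Type*} [MeasurableSpace X] [Add X] (μc : Measure (Config X))
    (η : Measure (MarkSp X)) (μcl : Measure (Config X)) : Prop :=
  IsProbabilityMeasure μcl ∧
  ∀ f : X → ℝ≥0∞, Measurable f →
    (∫⁻ γ, expNeg (Config.pair f γ) ∂μcl)
      = ∫⁻ γ, Config.prod₀ γ
          (fun x => ∫⁻ yb, expNeg (MarkSp.sumCoords (fun y => f (y + x)) yb) ∂η) ∂μc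

/-- `ĝ` is the measure on `Γ_{X×𝔛}` obtained from `g` by attaching to each point `x` of a
`g`-distributed configuration an i.i.d. mark `yb_x` with law `η`; characterized through its
Laplace functional. -/
def IsMarking {X : Type*} [MeasurableSpace X] (g : Measure (Config X)) (η : Measure (MarkSp X))
    (gh : Measure (Config (X × MarkSp X))) : Prop :=
  IsProbabilityMeasure gh ∧
  ∀ f : X × MarkSp X → ℝ≥0∞, Measurable f →
    (∫⁻ γh, expNeg (Config.pair f γh) ∂gh)
      = ∫⁻ γ, Config.prod₀ γ (fun x => ∫⁻ yb, expNeg (f (x, yb)) ∂η) ∂g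

/-! ### Gibbs measures -/

/-- The energy `E(ξ) = Σ_{ζ ⊆ ξ} Φ(ζ)` of a finite configuration. -/
def energy {X : Type*} (Φ : Finset X → EReal) (ξ : Finset X) : EReal :=
  ∑ ζ ∈ ξ.powerset, Φ ζ

/-- The interaction energy `E(ξ, γ) = Σ_{γ' ⊆ γ, γ' finite} Φ(ξ ∪ γ')` if the sum converges
absolutely, and `+∞` otherwise. -/
def intEnergy {X : Type*} [MeasurableSpace X] (Φ : Finset X → EReal) (ξ : Finset X)
    (γ : Config X) : EReal :=
  if (∑' s : {s : Finset X // ↑s ⊆ Config.atoms γ}, (Φ (ξ ∪ (s : Finset X))).abs) < ⊤ then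
    ((∑' s : {s : Finset X // ↑s ⊆ Config.atoms γ}, (Φ (ξ ∪ (s : Finset X))).toReal : ℝ) : EReal)
  else ⊤

/-- The (grand canonical) Gibbs measures `𝒢(θ, Φ)`: probability measures on the proper
configuration space satisfying the Nguyen–Zessin equation. -/
def IsGibbs {X : Type*} [MeasurableSpace X] [TopologicalSpace X]
    (θ : Measure X) (Φ : Finset X → EReal) (g : Measure (Config X)) : Prop :=
  IsProbabilityMeasure g ∧ (∀ᵐ γ ∂g, Config.IsProper γ) ∧
  ∀ H : X → Config X → ℝ≥0∞, Measurable (Function.uncurry H) →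
    (∫⁻ γ, ∫⁻ x, H x γ ∂(Config.toMeasure γ) ∂g)
      = ∫⁻ γ, ∫⁻ x, H x (Config.addPoint γ x) * expNegE (intEnergy Φ {x} γ) ∂θ ∂g

/-- The cylinder interaction potential `Φ̂(γ̂) := Φ(p_X(γ̂))` if the projection of `γ̂` to `X` is
simple (i.e. `γ̂` is a marked configuration), and `+∞` otherwise. -/
def liftPot {X : Type*} [MeasurableSpace X] (Φ : Finset X → EReal)
    (ξ : Finset (X × MarkSp X)) : EReal :=
  if (ξ.image Prod.fst).card = ξ.card then Φ (ξ.image Prod.fst) else ⊤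

/-! ### Correlation functions -/

/-- Iterated integral `∫…∫ φ(x₁,…,xₙ) μ(dx₁)…μ(dxₙ)`. -/
def multiInt {Y : Type*} [MeasurableSpace Y] :
    (n : ℕ) → Measure Y → ((Fin n → Y) → ℝ≥0∞) → ℝ≥0∞
  | 0, _, φ => φ fun i => i.elim0
  | n + 1, μ, φ => ∫⁻ y, multiInt n μ (fun x => φ (Fin.cons y x)) ∂μ

/-- `Σ_{{x₁,…,xₙ} ⊆ γ} φ(x₁,…,xₙ) = (1/n!) ∫_{≠} φ dγ^{⊗n}` (sum over `n`-point
subconfigurations). -/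
def factMoment {Y : Type*} [MeasurableSpace Y] (n : ℕ) (γ : Config Y)
    (φ : (Fin n → Y) → ℝ≥0∞) : ℝ≥0∞ :=
  ((n.factorial : ℝ≥0∞))⁻¹ *
    multiInt n (Config.toMeasure γ) (fun x => if Function.Injective x then φ x else 0)

/-- `κ` is the `n`-th correlation function of `μ` with respect to the reference measure `lam`. -/
def HasCorrelation {Y : Type*} [MeasurableSpace Y] (lam : Measure Y) (μ : Measure (Config Y))
    (n : ℕ) (κ : (Fin n → Y) → ℝ≥0∞) : Prop :=
  Measurable κ ∧
  ∀ φ : (Fin n → Y) → ℝ≥0∞, Measurable φ →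
    (∫⁻ γ, factMoment n γ φ ∂μ)
      = ((n.factorial : ℝ≥0∞))⁻¹ * multiInt n lam (fun x => φ x * κ x)

/-- The Ruelle bound: all correlation functions exist and `κⁿ ≤ Rⁿ` for some constant `R`. -/
def SatisfiesRuelle {Y : Type*} [MeasurableSpace Y] (lam : Measure Y)
    (μ : Measure (Config Y)) : Prop :=
  ∃ R : ℝ≥0, ∀ n : ℕ, 0 < n → ∃ κ : (Fin n → Y) → ℝ≥0∞,
    HasCorrelation lam μ n κ ∧ ∀ x, κ x ≤ (R : ℝ≥0∞) ^ n

/-- Extreme points of the (convex) class of Gibbs measures. -/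
def IsExtremeGibbs {X : Type*} [MeasurableSpace X] [TopologicalSpace X]
    (θ : Measure X) (Φ : Finset X → EReal) (g : Measure (Config X)) : Prop :=
  IsGibbs θ Φ g ∧ ∀ g₁ g₂ : Measure (Config X), IsGibbs θ Φ g₁ → IsGibbs θ Φ g₂ →
    g = (2 : ℝ≥0∞)⁻¹ • g₁ + (2 : ℝ≥0∞)⁻¹ • g₂ → g₁ = g₂

/-- The moment class `ℳⁿ`. -/
def MomentClass {Y : Type*} [MeasurableSpace Y] [TopologicalSpace Y] (n : ℕ)
    (μ : Measure (Config Y)) : Prop :=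
  ∀ f : Y → ℝ, Continuous f → HasCompactSupport f →
    (∫⁻ γ, (∫⁻ y, ENNReal.ofReal |f y| ∂(Config.toMeasure γ)) ^ n ∂μ) < ⊤

/-! ### The Euclidean setting `X = ℝ^d` -/

/-- `X = ℝ^d`. -/
abbrev Pt (d : ℕ) : Type := Fin d → ℝ

/-- Lebesgue measure `dyb` on `𝔛 = ⨆_{n∈ℤ₊} Xⁿ` (giving no mass to the infinite component). -/
def markVolume (d : ℕ) : Measure (MarkSp (Pt d)) :=
  Measure.sum fun n : ℕ =>
    Measure.map (fun y : Fin n → Pt d => (Sum.inl ⟨n, y⟩ : MarkSp (Pt d))) volume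

/-- The group `Diff₀(X)` of compactly supported diffeomorphisms of `X = ℝ^d`. -/
structure Diff0 (d : ℕ) where
  toFun : Pt d → Pt d
  invFun : Pt d → Pt d
  left_inv : Function.LeftInverse invFun toFun
  right_inv : Function.RightInverse invFun toFun
  smooth : ContDiff ℝ (⊤ : ℕ∞) toFun
  smooth_inv : ContDiff ℝ (⊤ : ℕ∞) invFun
  compactSupp : ∃ K : Set (Pt d), IsCompact K ∧ ∀ x ∉ K, toFun x = x

/-- The diffeomorphism `φ̂(x, yb) := (x, φ̄(yb + x) - x)` of `Z = X × 𝔛`. -/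
def hatDiff {d : ℕ} (φ : Diff0 d) (z : Pt d × MarkSp (Pt d)) : Pt d × MarkSp (Pt d) :=
  (z.1, MarkSp.shift (-z.1) (MarkSp.mapCoords φ.toFun (MarkSp.shift z.1 z.2)))

/-- The Jacobian determinant `J_φ(x)`. -/
def jacDet {d : ℕ} (φ : Pt d → Pt d) (x : Pt d) : ℝ := (fderiv ℝ φ x).det

/-- The Jacobian determinant `J_φ̄(yb) = ∏ᵢ J_φ(yᵢ)` of the diagonal action `φ̄` on `𝔛`. -/
def jacMark {d : ℕ} (φ : Pt d → Pt d) : MarkSp (Pt d) → ℝ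
  | .inl ⟨_, y⟩ => ∏ i, jacDet φ (y i)
  | .inr _ => 1

/-- The Radon–Nikodym factor
`ρ_φ(x,yb) = h(φ̄⁻¹(yb+x) - x) h(yb)⁻¹ J_φ̄(yb+x)⁻¹` (set to `1` when `h` vanishes). -/
def rhoDiff {d : ℕ} (h : MarkSp (Pt d) → ℝ≥0∞) (φ : Diff0 d)
    (z : Pt d × MarkSp (Pt d)) : ℝ≥0∞ :=
  let y' := MarkSp.shift (-z.1) (MarkSp.mapCoords φ.invFun (MarkSp.shift z.1 z.2))
  if h z.2 = 0 ∨ h y' = 0 then 1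
  else h y' / h z.2 * ENNReal.ofReal |jacMark φ.toFun (MarkSp.shift z.1 z.2)|⁻¹

/-- The divergence of a vector field on `ℝ^d`. -/
def divg {d : ℕ} (v : Pt d → Pt d) (y : Pt d) : ℝ :=
  ∑ j : Fin d, fderiv ℝ v y (Pi.single j 1) j

/-- The norm of the partial gradient `∇_{yᵢ} f(yb)` with respect to the `i`-th coordinate of
the `n`-th component of `𝔛`. -/
def coordGradNorm {d : ℕ} (f : MarkSp (Pt d) → ℝ) (n : ℕ) (y : Fin n → Pt d) (i : Fin n) : ℝ :=
  ‖(fderiv ℝ (fun y' : Fin n → Pt d => f (Sum.inl ⟨n, y'⟩)) y).comp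
      (ContinuousLinearMap.pi (Pi.single i (ContinuousLinearMap.id ℝ (Pt d))))‖

/-- `Σ_{yᵢ∈yb} |∇_{yᵢ} f(yb)|`. -/
def gradCoordSum {d : ℕ} (f : MarkSp (Pt d) → ℝ) : MarkSp (Pt d) → ℝ
  | .inl ⟨n, y⟩ => ∑ i : Fin n, coordGradNorm f n y i
  | .inr _ => 0

/-- membership in the Sobolev class `H^{1,n}(𝔛)` (with respect to `dyb`). -/
def MemH1n {d : ℕ} (f : MarkSp (Pt d) → ℝ) (n : ℕ) : Prop :=
  (∀ (k : ℕ) (y : Fin k → Pt d),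
      DifferentiableAt ℝ (fun y' : Fin k → Pt d => f (Sum.inl ⟨k, y'⟩)) y) ∧
  (∫⁻ yb, ENNReal.ofReal (|f yb| ^ n) ∂markVolume d) < ⊤ ∧
  (∫⁻ yb, ENNReal.ofReal (gradCoordSum f yb ^ n) ∂markVolume d) < ⊤

/-- The logarithmic derivative `β^v̂_η(x, yb) = Σᵢ β_η(yb)ᵢ·v(yᵢ+x) + Σᵢ (div v)(yᵢ+x)`
of `η(dyb) = h(yb)dyb` along the shifted vector field `v̂ₓ(yb) = (v(y₁+x),…,v(yₙ+x))`. -/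
def betaV {d : ℕ} (h : MarkSp (Pt d) → ℝ≥0∞) (v : Pt d → Pt d) :
    Pt d × MarkSp (Pt d) → ℝ
  | (x, .inl ⟨n, y⟩) =>
      (fderiv ℝ (fun y' : Fin n → Pt d => (h (Sum.inl ⟨n, y'⟩)).toReal) y)
          (fun i => v (y i + x)) / (h (Sum.inl ⟨n, y⟩)).toReal
        + ∑ i, divg v (y i + x)
  | (_, .inr _) => 0

/-! ### Cylinder functions on the configuration space -/

/-- The cylinder function `F(γ) = f(⟨φ₁,γ⟩, …, ⟨φ_k,γ⟩)`. -/
def cylF {d : ℕ} (k : ℕ) (f : (Fin k → ℝ) → ℝ) (φ : Fin k → Pt d → ℝ)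
    (γ : Config (Pt d)) : ℝ :=
  f fun j => ∫ y, φ j y ∂(Config.toMeasure γ)

/-- `Σ_{x∈γ} ∇ₓF(γ)·v(x) = Σ_j ∂_j f(⟨φ,γ⟩) ⟨∇φ_j·v, γ⟩` for a cylinder function `F`. -/
def cylGradV {d : ℕ} (k : ℕ) (f : (Fin k → ℝ) → ℝ) (φ : Fin k → Pt d → ℝ)
    (v : Pt d → Pt d) (γ : Config (Pt d)) : ℝ :=
  ∑ j : Fin k,
    fderiv ℝ f (fun j' => ∫ y, φ j' y ∂(Config.toMeasure γ)) (Pi.single j 1) *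
      ∫ y, fderiv ℝ (φ j) y (v y) ∂(Config.toMeasure γ)

/-- membership in `C_b^∞`: smooth with all derivatives bounded. -/
def IsCbSmooth {k : ℕ} (f : (Fin k → ℝ) → ℝ) : Prop :=
  ContDiff ℝ (⊤ : ℕ∞) f ∧ ∀ i : ℕ, ∃ C : ℝ, ∀ x, ‖iteratedFDeriv ℝ i f x‖ ≤ C

/-! ### STATEMENT 1 -/

section Aux

variable {β : ℕ → Type*} [∀ n, MeasurableSpace (β n)]

lemma aux_measurable_sigmaMk (n : ℕ) : Measurable (@Sigma.mk ℕ β n) := by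
  intro s hs
  exact MeasurableSpace.measurableSet_iInf.1 hs n

lemma aux_measurableEmbedding_sigmaMk (n : ℕ) :
    MeasurableEmbedding (@Sigma.mk ℕ β n) where
  injective := sigma_mk_injective
  measurable := aux_measurable_sigmaMk n
  measurableSet_image' := by
    intro s hs
    refine MeasurableSpace.measurableSet_iInf.2 fun m => ?_
    show MeasurableSet (Sigma.mk m ⁻¹' (Sigma.mk n '' s))
    rcases eq_or_ne m n with rfl | hmn
    · rw [Function.Injective.preimage_image sigma_mk_injective s]; exact hs
    · have : Sigma.mk m ⁻¹' (Sigma.mk n '' s) = (∅ : Set (β m)) := by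
        ext b
        simp only [Set.mem_preimage, Set.mem_image, Set.mem_empty_iff_false, iff_false,
          not_exists]
        rintro a ⟨_, h⟩
        exact hmn (congrArg Sigma.fst h).symm
      rw [this]; exact MeasurableSet.empty

/-- A function on `α × Σ n, β n` is measurable if each `n`-component is. -/
lemma aux_measurable_from_prod_sigma {α γ : Type*} [MeasurableSpace α] [MeasurableSpace γ]
    {f : α × (Σ n : ℕ, β n) → γ}
    (h : ∀ n, Measurable fun p : α × β n => f (p.1, ⟨n, p.2⟩)) : Measurable f := by
  intro s hs
  have key : f ⁻¹' s = ⋃ n,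
      (fun p : α × β n => ((p.1, (⟨n, p.2⟩ : Σ n : ℕ, β n)) : α × (Σ n : ℕ, β n))) ''
        ((fun p : α × β n => f (p.1, ⟨n, p.2⟩)) ⁻¹' s) := by
    ext ⟨x, ⟨n, b⟩⟩
    simp only [Set.mem_preimage, Set.mem_iUnion, Set.mem_image]
    constructor
    · intro hfx; exact ⟨n, (x, b), hfx, rfl⟩
    · rintro ⟨m, p, hp, heq⟩
      cases heq
      exact hp
  rw [key]
  refine MeasurableSet.iUnion fun n => ?_
  exact (MeasurableEmbedding.prodMap MeasurableEmbedding.id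
    (aux_measurableEmbedding_sigmaMk n)).measurableSet_image.2 ((h n) hs)

/-- A function on `α × (β' ⊕ γ')` is measurable if both components are. -/
lemma aux_measurable_from_prod_sum {α β' γ' δ : Type*} [MeasurableSpace α]
    [MeasurableSpace β'] [MeasurableSpace γ'] [MeasurableSpace δ]
    {f : α × (β' ⊕ γ') → δ}
    (hl : Measurable fun p : α × β' => f (p.1, Sum.inl p.2))
    (hr : Measurable fun p : α × γ' => f (p.1, Sum.inr p.2)) : Measurable f := by
  have : f = (fun q : (α × β') ⊕ (α × γ') =>
      Sum.elim (fun p : α × β' => f (p.1, Sum.inl p.2))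
        (fun p : α × γ' => f (p.1, Sum.inr p.2)) q) ∘
      (MeasurableEquiv.prodSumDistrib α β' γ') := by
    funext ⟨x, w⟩
    cases w <;> rfl
  rw [this]
  exact (hl.sumElim hr).comp (MeasurableEquiv.prodSumDistrib α β' γ').measurable

end Aux

section QKer

variable {X : Type} [MeasurableSpace X] [TopologicalSpace X] [PolishSpace X] [BorelSpace X]
  [AddCommGroup X] [IsTopologicalAddGroup X]

lemma aux_measurable_qKer_apply {B : Set X} (hB : MeasurableSet B) :
    Measurable fun z : X × MarkSp X => qKer z B := by
  apply aux_measurable_from_prod_sum (β' := Σ n : ℕ, (Fin n → X)) (γ' := ℕ → X)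
  · apply aux_measurable_from_prod_sigma
    intro n
    have heq : (fun p : X × (Fin n → X) =>
        qKer ((p.1, Sum.inl ⟨n, p.2⟩) : X × MarkSp X) B)
        = fun p : X × (Fin n → X) => ∑ i : Fin n, B.indicator 1 (p.2 i + p.1) := by
      funext p
      show (Measure.sum fun i : Fin n => Measure.dirac (p.2 i + p.1)) B = _
      rw [Measure.sum_apply _ hB, tsum_fintype]
      exact Finset.sum_congr rfl fun i _ => Measure.dirac_apply' _ hB
    refine (congrArg Measurable heq).mpr ?_
    exact Finset.measurable_sum _ fun i _ =>
      (measurable_one.indicator hB).comp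
        (((measurable_pi_apply i).comp measurable_snd).add measurable_fst)
  · have heq : (fun p : X × (ℕ → X) =>
        qKer ((p.1, Sum.inr p.2) : X × MarkSp X) B)
        = fun p : X × (ℕ → X) => ∑' i : ℕ, B.indicator 1 (p.2 i + p.1) := by
      funext p
      show (Measure.sum fun i : ℕ => Measure.dirac (p.2 i + p.1)) B = _
      rw [Measure.sum_apply _ hB]
      exact tsum_congr fun i => Measure.dirac_apply' _ hB
    refine (congrArg Measurable heq).mpr ?_
    exact Measurable.ennreal_tsum fun i =>
      (measurable_one.indicator hB).comp
        (((measurable_pi_apply i).comp measurable_snd).add measurable_fst)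

lemma aux_measurable_qKer : Measurable (qKer : X × MarkSp X → Measure X) :=
  Measure.measurable_of_measurable_coe _ fun _ hB => aux_measurable_qKer_apply hB

end QKer

section GenConfigAux

variable {Y : Type*} [MeasurableSpace Y]

lemma aux_tsum_zero_one {g : ℕ → ℝ≥0∞} (hg : ∀ i, g i = 0 ∨ g i = 1) :
    (∃ n : ℕ, ∑' i, g i = (n : ℝ≥0∞)) ∨ ∑' i, g i = ⊤ := by
  by_cases hfin : (Function.support g).Finite
  · left
    refine ⟨hfin.toFinset.card, ?_⟩
    rw [tsum_eq_sum (s := hfin.toFinset)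
      (fun i hi => by by_contra h; exact hi (hfin.mem_toFinset.2 h))]
    have : ∀ i ∈ hfin.toFinset, g i = 1 := by
      intro i hi
      rcases hg i with h | h
      · exact absurd h (hfin.mem_toFinset.1 hi)
      · exact h
    rw [Finset.sum_congr rfl this, Finset.sum_const, nsmul_eq_mul, mul_one]
  · right
    have hrepr : g = Set.indicator (Function.support g) (fun _ => (1 : ℝ≥0∞)) := by
      funext i
      rcases hg i with h | h <;>
        simp [Set.indicator, Function.mem_support, h]
    rw [hrepr, ← tsum_subtype]
    have : Infinite (Function.support g) := Set.infinite_coe_iff.2 hfin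
    exact ENNReal.tsum_const_eq_top_of_ne_zero one_ne_zero

lemma aux_genConfig_nat (γ : GenConfig Y) {A : Set Y} (hA : MeasurableSet A) :
    (∃ n : ℕ, Config.toMeasure γ.1 A = (n : ℝ≥0∞)) ∨ Config.toMeasure γ.1 A = ⊤ := by
  obtain ⟨p, hp⟩ := γ.2
  have hval : Config.toMeasure γ.1 A = ∑' i, optDirac (p i) A := by
    rw [hp]
    exact Measure.sum_apply _ hA
  rw [hval]
  apply aux_tsum_zero_one
  intro i
  cases hpi : p i with
  | none => left; simp [optDirac]
  | some y =>
    show Measure.dirac y A = 0 ∨ Measure.dirac y A = 1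
    rw [Measure.dirac_apply' _ hA]
    by_cases hy : y ∈ A
    · right; simp [hy]
    · left; simp [hy]

lemma aux_measurable_genConfig_coe :
    Measurable (fun γ : GenConfig Y => γ.1) := fun s hs => ⟨s, hs, rfl⟩

lemma aux_measurable_eval {A : Set Y} (hA : MeasurableSet A) :
    Measurable fun γ : GenConfig Y => Config.toMeasure γ.1 A := by
  have hT : ∀ n : ℕ, MeasurableSet {γ : GenConfig Y | Config.toMeasure γ.1 A = (n : ℝ≥0∞)} := by
    intro n
    have h1 : MeasurableSet {γ : Config Y | Config.toMeasure γ A = (n : ℝ≥0∞)} :=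
      MeasurableSpace.measurableSet_generateFrom ⟨A, n, hA, rfl⟩
    exact h1.preimage aux_measurable_genConfig_coe
  intro s _
  have key : (fun γ : GenConfig Y => Config.toMeasure γ.1 A) ⁻¹' s =
      (⋃ n : ℕ, ⋃ (_ : (n : ℝ≥0∞) ∈ s),
        {γ : GenConfig Y | Config.toMeasure γ.1 A = (n : ℝ≥0∞)}) ∪
      ⋃ (_ : (⊤ : ℝ≥0∞) ∈ s),
        (⋃ n : ℕ, {γ : GenConfig Y | Config.toMeasure γ.1 A = (n : ℝ≥0∞)})ᶜ := by
    ext γ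
    simp only [Set.mem_preimage, Set.mem_union, Set.mem_iUnion, Set.mem_setOf_eq,
      Set.mem_compl_iff, not_exists]
    rcases aux_genConfig_nat γ hA with ⟨n, hn⟩ | htop
    · rw [hn]
      constructor
      · intro h; exact Or.inl ⟨n, h, rfl⟩
      · rintro (⟨m, hm, hmn⟩ | ⟨h, hc⟩)
        · rw [hmn]; exact hm
        · exact absurd rfl (hc n)
    · rw [htop]
      constructor
      · intro h
        refine Or.inr ⟨h, fun n hn => ?_⟩
        exact (ENNReal.natCast_ne_top n) (hn ▸ rfl)
      · rintro (⟨m, hm, hmn⟩ | ⟨h, _⟩)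
        · exact absurd hmn.symm (ENNReal.natCast_ne_top m)
        · exact h
  rw [key]
  refine MeasurableSet.union ?_ ?_
  · exact MeasurableSet.iUnion fun n => MeasurableSet.iUnion fun _ => hT n
  · exact MeasurableSet.iUnion fun _ => (MeasurableSet.iUnion fun n => hT n).compl

lemma aux_measurable_genConfig_toMeasure :
    Measurable fun γ : GenConfig Y => Config.toMeasure γ.1 :=
  Measure.measurable_of_measurable_coe _ fun _ hA => aux_measurable_eval hA

end GenConfigAux

/-- **Proposition 2.8**: the projection `𝔮 : Γ♯_Z → Γ♯_X` is measurable. -/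
theorem statement_1
    {X : Type} [MeasurableSpace X] [TopologicalSpace X] [PolishSpace X] [BorelSpace X]
    [AddCommGroup X] [IsTopologicalAddGroup X] :
    Measurable fun γh : GenConfig (X × MarkSp X) => qmap γh.1 := by
  apply measurable_generateFrom
  rintro A ⟨B, n, hB, rfl⟩
  have h1 : Measurable fun γh : GenConfig (X × MarkSp X) =>
      ∫⁻ z, qKer z B ∂(Config.toMeasure γh.1) :=
    (Measure.measurable_lintegral (aux_measurable_qKer_apply hB)).comp
      aux_measurable_genConfig_toMeasure
  have key : (fun γh : GenConfig (X × MarkSp X) => qmap γh.1) ⁻¹'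
      {γ : Config X | Config.toMeasure γ B = (n : ℝ≥0∞)}
      = (fun γh : GenConfig (X × MarkSp X) =>
          ∫⁻ z, qKer z B ∂(Config.toMeasure γh.1)) ⁻¹' {(n : ℝ≥0∞)} := by
    ext γh
    simp only [Set.mem_preimage, Set.mem_setOf_eq, Set.mem_singleton_iff]
    have : Config.toMeasure (qmap γh.1) B = ∫⁻ z, qKer z B ∂(Config.toMeasure γh.1) :=
      Measure.bind_apply hB aux_measurable_qKer.aemeasurable
    rw [this]
  rw [key]
  exact h1 (measurableSet_singleton _)

end
end

section
/- Let Q : L²(Γ_X, g_cl) → L²(Γ_Z, ĝ) be the isometry (QF)(γ̂) := F(𝔮(γ̂)). Then its adjoint Q* : L²(Γ_Z, ĝ) → L²(Γ_X, g_cl) extends to a bounded operator Q* : L¹(Γ_Z, ĝ) → L¹(Γ_X, g_cl). -/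
open MeasureTheory ENNReal ProbabilityTheory
open scoped Classical NNReal

noncomputable section

/-! ### Auxiliary lemmas -/

section Aux

open Filter Topology

lemma measurable_from_sigma {ι : Type*} {C : ι → Type*} [∀ i, MeasurableSpace (C i)]
    {M : Type*} [MeasurableSpace M] (f : (Σ i, C i) → M)
    (h : ∀ i, Measurable fun y : C i => f ⟨i, y⟩) : Measurable f :=
  fun _ hs => MeasurableSpace.measurableSet_iInf.2 fun i => h i hs

lemma measurable_from_prod_sum {X A B M : Type*} [MeasurableSpace X] [MeasurableSpace A]
    [MeasurableSpace B] [MeasurableSpace M] {f : X × (A ⊕ B) → M}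
    (h1 : Measurable fun p : X × A => f (p.1, .inl p.2))
    (h2 : Measurable fun p : X × B => f (p.1, .inr p.2)) : Measurable f := by
  have hf : f = (Sum.elim (fun p : X × A => f (p.1, .inl p.2))
      (fun p : X × B => f (p.1, .inr p.2))) ∘ (MeasurableEquiv.prodSumDistrib X A B) := by
    funext p; rcases p with ⟨x, a | b⟩ <;> rfl
  rw [hf]
  exact (h1.sumElim h2).comp (MeasurableEquiv.measurable _)

/-- The embedding of `Option α` into `α ⊕ Unit` underlying the measurable space instance. -/
def optJ (α : Type*) : Option α → α ⊕ Unit :=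
  fun o : Option α => Option.elim o (Sum.inr ()) Sum.inl

lemma measurable_optJ {α : Type*} [MeasurableSpace α] : Measurable (optJ α) :=
  comap_measurable _

lemma measurable_some'' {α : Type*} [MeasurableSpace α] :
    Measurable (fun a : α => (some a : Option α)) := by
  intro s hs
  obtain ⟨t, ht, rfl⟩ := hs
  exact measurable_inl ht

/-- Extraction of the `n`-th finite component of a mark. -/
def pickF {X : Type*} (n : ℕ) : MarkSp X → Option (Fin n → X)
  | .inl ⟨m, y⟩ => if h : m = n then some (fun i => y (Fin.cast h.symm i)) else none
  | .inr _ => none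

/-- Extraction of the infinite component of a mark. -/
def pickI {X : Type*} : MarkSp X → Option (ℕ → X)
  | .inl _ => none
  | .inr y => some y

lemma measurable_pickF {X : Type*} [MeasurableSpace X] (n : ℕ) :
    Measurable (pickF (X := X) n) := by
  apply measurable_fun_sum
  · apply measurable_from_sigma (f := fun s : Σ m : ℕ, (Fin m → X) => pickF n (Sum.inl s))
    intro m
    by_cases h : m = n
    · simp only [pickF, dif_pos h]
      exact measurable_some''.comp (measurable_pi_lambda _ fun i => measurable_pi_apply _)
    · simp only [pickF, dif_neg h]
      exact measurable_const
  · exact measurable_const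

lemma measurable_pickI {X : Type*} [MeasurableSpace X] :
    Measurable (pickI (X := X)) := by
  apply measurable_fun_sum
  · exact measurable_const
  · exact measurable_some''.comp measurable_id

lemma option_elim_eq_sum_elim {α M : Type*} (o : Option α) (z : M) (f : α → M) :
    o.elim z f = Sum.elim f (fun _ => z) (optJ α o) := by cases o <;> rfl

/-- Measurability of `z ↦ 𝔮(z)(B)`. -/
lemma qKer_apply_measurable {d : ℕ} {B : Set (Pt d)} (hB : MeasurableSet B) :
    Measurable (fun z : Pt d × MarkSp (Pt d) => qKer z B) := by
  classical
  set ind : Pt d → ℝ≥0∞ := B.indicator 1 with hind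
  have hindm : Measurable ind := measurable_one.indicator hB
  set W : ℕ → Pt d × MarkSp (Pt d) → ℝ≥0∞ := fun n z =>
    (pickF n z.2).elim 0 (fun y => ∑ i : Fin n, ind (y i + z.1)) with hW
  set Wi : Pt d × MarkSp (Pt d) → ℝ≥0∞ := fun z =>
    (pickI z.2).elim 0 (fun y : ℕ → Pt d => ∑' i : ℕ, ind (y i + z.1)) with hWi
  have hWm : ∀ n, Measurable (W n) := by
    intro n
    have hg : Measurable (fun p : Pt d × ((Fin n → Pt d) ⊕ Unit) =>
        Sum.elim (fun y : Fin n → Pt d => ∑ i : Fin n, ind (y i + p.1)) (fun _ => 0) p.2) := by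
      apply measurable_from_prod_sum
      · apply Finset.measurable_sum
        intro i _
        exact hindm.comp <| measurable_pi_lambda _ fun j =>
          ((measurable_pi_apply j).comp ((measurable_pi_apply i).comp measurable_snd)).add
            ((measurable_pi_apply j).comp measurable_fst)
      · exact measurable_const
    have : W n = fun z => (fun p : Pt d × ((Fin n → Pt d) ⊕ Unit) =>
        Sum.elim (fun y : Fin n → Pt d => ∑ i : Fin n, ind (y i + p.1)) (fun _ => 0) p.2)
          (z.1, optJ _ (pickF n z.2)) := by
      funext z; simp only [hW]; rw [option_elim_eq_sum_elim]
    rw [this]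
    exact hg.comp (measurable_fst.prodMk (measurable_optJ.comp
      ((measurable_pickF n).comp measurable_snd)))
  have hWim : Measurable Wi := by
    have hg : Measurable (fun p : Pt d × ((ℕ → Pt d) ⊕ Unit) =>
        Sum.elim (fun y : ℕ → Pt d => ∑' i : ℕ, ind (y i + p.1)) (fun _ => 0) p.2) := by
      apply measurable_from_prod_sum
      · apply Measurable.ennreal_tsum
        intro i
        exact hindm.comp <| measurable_pi_lambda _ fun j =>
          ((measurable_pi_apply j).comp ((measurable_pi_apply i).comp measurable_snd)).add
            ((measurable_pi_apply j).comp measurable_fst)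
      · exact measurable_const
    have : Wi = fun z => (fun p : Pt d × ((ℕ → Pt d) ⊕ Unit) =>
        Sum.elim (fun y : ℕ → Pt d => ∑' i : ℕ, ind (y i + p.1)) (fun _ => 0) p.2)
          (z.1, optJ _ (pickI z.2)) := by
      funext z; simp only [hWi]; rw [option_elim_eq_sum_elim]
    rw [this]
    exact hg.comp (measurable_fst.prodMk (measurable_optJ.comp
      (measurable_pickI.comp measurable_snd)))
  have heq : (fun z : Pt d × MarkSp (Pt d) => qKer z B)
      = fun z => (∑' n : ℕ, W n z) + Wi z := by
    funext z
    rcases z with ⟨x, mk⟩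
    rcases mk with ⟨m, y⟩ | y
    · have hq : qKer (x, (Sum.inl ⟨m, y⟩ : MarkSp (Pt d))) B
          = ∑ i : Fin m, ind (y i + x) := by
        show (Measure.sum fun i : Fin m => Measure.dirac ((fun i => y i + x) i)) B = _
        rw [Measure.sum_apply _ hB, tsum_fintype]
        exact Finset.sum_congr rfl fun i _ => Measure.dirac_apply' _ hB
      rw [hq]
      have h1 : ∑' n : ℕ, W n (x, (Sum.inl ⟨m, y⟩ : MarkSp (Pt d)))
          = ∑ i : Fin m, ind (y i + x) := by
        rw [tsum_eq_single m]
        · show (pickF m (Sum.inl ⟨m, y⟩ : MarkSp (Pt d))).elim 0 _ = _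
          have : pickF m (Sum.inl ⟨m, y⟩ : MarkSp (Pt d))
              = some (fun i : Fin m => y (Fin.cast rfl i)) := by
            show (if h : m = m then _ else none) = _
            rw [dif_pos rfl]
          rw [this]
          show ∑ i : Fin m, ind (y (Fin.cast rfl i) + x) = _
          exact Finset.sum_congr rfl fun i _ => by congr 1
        · intro n hn
          show (pickF n (Sum.inl ⟨m, y⟩ : MarkSp (Pt d))).elim 0 _ = 0
          have : pickF n (Sum.inl ⟨m, y⟩ : MarkSp (Pt d)) = none := by
            show (if h : m = n then _ else none) = none
            rw [dif_neg (fun h => hn h.symm)]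
          rw [this]
          rfl
      have h2 : Wi (x, (Sum.inl ⟨m, y⟩ : MarkSp (Pt d))) = 0 := rfl
      rw [h1, h2, add_zero]
    · have hq : qKer (x, (Sum.inr y : MarkSp (Pt d))) B = ∑' i : ℕ, ind (y i + x) := by
        show (Measure.sum fun i : ℕ => Measure.dirac ((fun i => y i + x) i)) B = _
        rw [Measure.sum_apply _ hB]
        exact tsum_congr fun i => Measure.dirac_apply' _ hB
      rw [hq]
      have h1 : ∑' n : ℕ, W n (x, (Sum.inr y : MarkSp (Pt d))) = 0 := by
        simp only [hW]
        show (∑' n : ℕ, (0:ℝ≥0∞)) = 0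
        exact tsum_zero
      rw [h1, zero_add]
      rfl
  rw [heq]
  exact (Measurable.ennreal_tsum hWm).add hWim

lemma qKer_measurable {d : ℕ} : Measurable (qKer : Pt d × MarkSp (Pt d) → Measure (Pt d)) :=
  Measure.measurable_of_measurable_coe _ fun _ hs => qKer_apply_measurable hs


lemma measurableSet_configEval {Y : Type*} [MeasurableSpace Y] {B : Set Y}
    (hB : MeasurableSet B) (n : ℕ) :
    MeasurableSet {γ : Config Y | Config.toMeasure γ B = (n : ℝ≥0∞)} :=
  MeasurableSpace.measurableSet_generateFrom ⟨B, n, hB, rfl⟩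

lemma measurable_masked_eval {Y : Type*} [MeasurableSpace Y] {S : Set (Config Y)}
    (hS : MeasurableSet S) (hSnat : ∀ γ ∈ S, Config.IsNatValued γ) {A : Set Y}
    (hA : MeasurableSet A) :
    Measurable (S.indicator fun γ : Config Y => Config.toMeasure γ A) := by
  classical
  set D : ℕ → Set (Config Y) := fun k =>
    {γ : Config Y | γ ∈ S ∧ ∀ m : ℕ, m ≤ k → Config.toMeasure γ A ≠ (m : ℝ≥0∞)} with hD
  have hDm : ∀ k, MeasurableSet (D k) := by
    intro k
    have : D k = S ∩ ⋂ m ∈ Finset.range (k+1), {γ : Config Y | Config.toMeasure γ A = (m : ℝ≥0∞)}ᶜ := by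
      ext γ
      simp only [hD, Set.mem_setOf_eq, Set.mem_inter_iff, Set.mem_iInter, Set.mem_compl_iff,
        Finset.mem_range, Nat.lt_succ_iff]
    rw [this]
    exact hS.inter (MeasurableSet.biInter (Finset.range (k+1)).countable_toSet
      fun m _ => (measurableSet_configEval hA m).compl)
  have heq : (S.indicator fun γ : Config Y => Config.toMeasure γ A)
      = fun γ => ∑' k : ℕ, Set.indicator (D k) (fun _ => (1:ℝ≥0∞)) γ := by
    funext γ
    by_cases hγ : γ ∈ S
    · rcases hSnat γ hγ A hA with ⟨n, hn⟩ | htop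
      · rw [Set.indicator_of_mem hγ, hn]
        have hval : ∀ k : ℕ, Set.indicator (D k) (fun _ => (1:ℝ≥0∞)) γ
            = if k < n then 1 else 0 := by
          intro k
          by_cases hk : k < n
          · have hmem : γ ∈ D k := by
              simp only [hD, Set.mem_setOf_eq]
              exact ⟨hγ, fun m hm hme => by
                rw [hn] at hme
                exact absurd (Nat.cast_injective hme) (by omega)⟩
            rw [Set.indicator_of_mem hmem, if_pos hk]
          · have hmem : γ ∉ D k := by
              simp only [hD, Set.mem_setOf_eq]
              rintro ⟨-, hall⟩
              exact hall n (le_of_not_gt hk) hn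
            rw [Set.indicator_of_notMem hmem, if_neg hk]
        rw [tsum_congr hval]
        symm
        rw [tsum_eq_sum (s := Finset.range n) (fun k hk => if_neg (by simpa using hk))]
        rw [Finset.sum_congr rfl fun k hk => if_pos (Finset.mem_range.1 hk)]
        simp
      · rw [Set.indicator_of_mem hγ, htop]
        have hval : ∀ k : ℕ, Set.indicator (D k) (fun _ => (1:ℝ≥0∞)) γ = 1 := by
          intro k
          have hmem : γ ∈ D k := by
            simp only [hD, Set.mem_setOf_eq]
            exact ⟨hγ, fun m _ hme => by
              rw [htop] at hme
              exact (ENNReal.natCast_ne_top m) hme.symm⟩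
          exact Set.indicator_of_mem hmem _
        rw [tsum_congr hval]
        exact (ENNReal.tsum_const_eq_top_of_ne_zero one_ne_zero).symm
    · rw [Set.indicator_of_notMem hγ]
      symm
      rw [tsum_congr (fun k => Set.indicator_of_notMem (fun hmem => hγ hmem.1) _)]
      exact tsum_zero
  rw [heq]
  exact Measurable.ennreal_tsum fun k => measurable_const.indicator (hDm k)

lemma measurable_masked_lintegral {Y : Type*} [MeasurableSpace Y] {S : Set (Config Y)}
    (hS : MeasurableSet S) (hSnat : ∀ γ ∈ S, Config.IsNatValued γ) {u : Y → ℝ≥0∞}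
    (hu : Measurable u) :
    Measurable (S.indicator fun γ : Config Y => ∫⁻ y, u y ∂(Config.toMeasure γ)) := by
  classical
  have key : ∀ s : SimpleFunc Y ℝ≥0∞,
      Measurable (S.indicator fun γ : Config Y => s.lintegral (Config.toMeasure γ)) := by
    intro s
    have hrw : (S.indicator fun γ : Config Y => s.lintegral (Config.toMeasure γ))
        = fun γ => ∑ x ∈ s.range, x * (S.indicator (fun γ' : Config Y =>
            Config.toMeasure γ' (s ⁻¹' {x})) γ) := by
      funext γ
      by_cases hγ : γ ∈ S
      · simp only [Set.indicator_of_mem hγ, SimpleFunc.lintegral]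
      · simp only [Set.indicator_of_notMem hγ, mul_zero, Finset.sum_const_zero]
    rw [hrw]
    exact Finset.measurable_sum _ fun x _ =>
      (measurable_masked_eval hS hSnat (s.measurableSet_fiber x)).const_mul x
  have heq : (S.indicator fun γ : Config Y => ∫⁻ y, u y ∂(Config.toMeasure γ))
      = fun γ => ⨆ n, (S.indicator fun γ' : Config Y =>
          (SimpleFunc.eapprox u n).lintegral (Config.toMeasure γ')) γ := by
    funext γ
    by_cases hγ : γ ∈ S
    · simp only [Set.indicator_of_mem hγ]
      rw [lintegral_eq_iSup_eapprox_lintegral hu]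
    · simp [Set.indicator_of_notMem hγ]
  rw [heq]
  exact Measurable.iSup fun n => key _


theorem dd_factor {A B : Type*} [mB : MeasurableSpace B] (q : A → B) {f : A → ℝ}
    (hf : @MeasureTheory.StronglyMeasurable A ℝ _ (mB.comap q) f) :
    ∃ F : B → ℝ, Measurable F ∧ ∀ a, F (q a) = f a := by
  have hsim : ∀ s : @SimpleFunc A (mB.comap q) ℝ,
      ∃ g : B → ℝ, Measurable g ∧ ∀ a, g (q a) = s a := by
    intro s
    refine @SimpleFunc.induction A ℝ (mB.comap q) _
      (fun s => ∃ g : B → ℝ, Measurable g ∧ ∀ a, g (q a) = s a) ?_ ?_ s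
    · intro c t ht
      obtain ⟨B', hB', rfl⟩ := ht
      refine ⟨B'.indicator fun _ => c, measurable_const.indicator hB', fun a => ?_⟩
      simp [SimpleFunc.piecewise_apply, Set.indicator_apply, Set.mem_preimage]
      rfl
    · rintro f g - ⟨gf, hgf, hfe⟩ ⟨gg, hgg, hge⟩
      exact ⟨gf + gg, hgf.add hgg, fun a => by simp [hfe a, hge a]⟩
  choose g hgm hge using fun n => hsim (hf.approx n)
  refine ⟨fun b => (Filter.liminf (fun n => ((g n b : ℝ) : EReal)) Filter.atTop).toReal,
    measurable_ereal_toReal.comp (Measurable.liminf fun n =>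
      measurable_coe_real_ereal.comp (hgm n)), fun a => ?_⟩
  have ht : Filter.Tendsto (fun n => ((g n (q a) : ℝ) : EReal)) Filter.atTop
      (𝓝 ((f a : ℝ) : EReal)) := by
    have h0 : Filter.Tendsto (fun n => hf.approx n a) Filter.atTop (𝓝 (f a)) :=
      hf.tendsto_approx a
    have hrw : (fun n => ((g n (q a) : ℝ) : EReal)) = fun n => ((hf.approx n a : ℝ) : EReal) := by
      funext n; rw [hge]
    rw [hrw]
    exact (continuous_coe_real_ereal.tendsto _).comp h0
  show (Filter.liminf (fun n => ((g n (q a) : ℝ) : EReal)) Filter.atTop).toReal = f a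
  rw [ht.liminf_eq, EReal.toReal_coe]

/-- The sub-σ-algebra generated by a map. -/
def subAlg {Y Z' : Type*} [MeasurableSpace Z'] (q : Y → Z') : MeasurableSpace Y :=
  MeasurableSpace.comap q inferInstance

end Aux


/-! ### STATEMENT 15 -/

/-- **Lemma 3.6**: the adjoint `Q*` of the isometry `QF := F ∘ 𝔮` extends to a bounded operator
`L¹(Γ_Z, ĝ) → L¹(Γ_X, g_cl)`. -/
theorem statement_15 {d : ℕ} (θ : Measure (Pt d)) [IsLocallyFiniteMeasure θ] [SigmaFinite θ]
    (hθtrans : ∀ B : Set (Pt d), IsCompact B → ∃ C : ℝ≥0∞, C ≠ ⊤ ∧ ∀ x, θ ((· + x) '' B) ≤ C)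
    (Φ : Finset (Pt d) → EReal)
    (h : MarkSp (Pt d) → ℝ≥0∞) (hmeas : Measurable h)
    (η : Measure (MarkSp (Pt d))) [IsProbabilityMeasure η]
    (hη : η = (markVolume d).withDensity h)
    (hpos : ∀ᵐ yb ∂(markVolume d), 0 < h yb)
    (hN1 : (∫⁻ yb, MarkSp.count Set.univ yb ∂η) < ⊤)
    (g : Measure (Config (Pt d))) (hg : IsGibbs θ Φ g)
    (κ₁ : Pt d → ℝ≥0∞) (hκ : HasCorrelation θ g 1 fun x => κ₁ (x 0))
    (C₁ : ℝ≥0∞) (hC₁ : C₁ ≠ ⊤) (hκb : ∀ x, κ₁ x ≤ C₁)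
    (gh : Measure (Config (Pt d × MarkSp (Pt d))))
    (hmark : IsMarking g η gh) (hgh : IsGibbs (θ.prod η) (liftPot Φ) gh)
    (gcl : Measure (Config (Pt d)))
    (hgcl : ∀ A : Set (Config (Pt d)), MeasurableSet A → gcl A = gh (qmap ⁻¹' A)) :
    ∃ T : Lp ℝ 1 gh →L[ℝ] Lp ℝ 1 gcl,
      ∀ (G : Lp ℝ 1 gh) (F : Config (Pt d) → ℝ), Measurable F → (∃ C, ∀ γ, |F γ| ≤ C) →
        ∫ γ, (T G : Config (Pt d) → ℝ) γ * F γ ∂gcl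
          = ∫ γh, (G : Config (Pt d × MarkSp (Pt d)) → ℝ) γh * F (qmap γh) ∂gh := by
  classical
  haveI : IsProbabilityMeasure gh := hgh.1
  -- a measurable set of full measure consisting of proper configurations
  obtain ⟨N₀, hN₀sub, hN₀meas, hN₀null⟩ :=
    exists_measurable_superset_of_null (ae_iff.mp hgh.2.1)
  set S₀ : Set (Config (Pt d × MarkSp (Pt d))) := N₀ᶜ with hS₀def
  have hS₀meas : MeasurableSet S₀ := hN₀meas.compl
  have hS₀proper : ∀ γ ∈ S₀, Config.IsProper γ := by
    intro γ hγ
    by_contra hc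
    exact hγ (hN₀sub hc)
  have hnat : ∀ γ ∈ S₀, Config.IsNatValued γ := fun γ hγ => (hS₀proper γ hγ).1
  have hS₀ae : ∀ᵐ γ ∂gh, γ ∈ S₀ := by
    rw [ae_iff]
    refine measure_mono_null (fun γ hγ => ?_) hN₀null
    simpa [hS₀def] using hγ
  -- the measurable modification of `qmap`
  set q' : Config (Pt d × MarkSp (Pt d)) → Config (Pt d) :=
    fun γ => if γ ∈ S₀ then qmap γ else Config.mk 0 with hq'def
  have hqker_all : Measurable (qKer : Pt d × MarkSp (Pt d) → Measure (Pt d)) := qKer_measurable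
  have hq'meas : Measurable q' := by
    have hgen : @Measurable _ _ _ (MeasurableSpace.generateFrom
        {A : Set (Config (Pt d)) | ∃ (B : Set (Pt d)) (n : ℕ), MeasurableSet B ∧
          A = {γ : Config (Pt d) | Config.toMeasure γ B = (n : ℝ≥0∞)}}) q' := by
      apply measurable_generateFrom
      rintro t ⟨B, n, hB, rfl⟩
      have hVmeas : Measurable (S₀.indicator fun γ : Config (Pt d × MarkSp (Pt d)) =>
          ∫⁻ z, qKer z B ∂(Config.toMeasure γ)) :=
        measurable_masked_lintegral hS₀meas hnat (qKer_apply_measurable hB)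
      have hset : q' ⁻¹' {γ : Config (Pt d) | Config.toMeasure γ B = (n : ℝ≥0∞)}
          = (S₀ ∩ (S₀.indicator fun γ : Config (Pt d × MarkSp (Pt d)) =>
              ∫⁻ z, qKer z B ∂(Config.toMeasure γ)) ⁻¹' {(n : ℝ≥0∞)})
            ∪ (S₀ᶜ ∩ {_γ : Config (Pt d × MarkSp (Pt d)) | (0:ℝ≥0∞) = (n : ℝ≥0∞)}) := by
        ext γ
        by_cases hγ : γ ∈ S₀
        · simp only [Set.mem_preimage, Set.mem_setOf_eq, Set.mem_union, Set.mem_inter_iff,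
            Set.mem_singleton_iff, Set.mem_compl_iff, hγ, true_and,
            not_true_eq_false, false_and, or_false]
          rw [show q' γ = qmap γ from if_pos hγ, Set.indicator_of_mem hγ]
          rw [show Config.toMeasure (qmap γ) B = ∫⁻ z, qKer z B ∂(Config.toMeasure γ) from
            Measure.bind_apply hB hqker_all.aemeasurable]
        · simp only [Set.mem_preimage, Set.mem_setOf_eq, Set.mem_union, Set.mem_inter_iff,
            Set.mem_singleton_iff, Set.mem_compl_iff, hγ, false_and,
            not_false_eq_true, true_and, false_or]
          rw [show q' γ = Config.mk 0 from if_neg hγ]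
          show (0 : Measure (Pt d)) B = (n : ℝ≥0∞) ↔ (0:ℝ≥0∞) = (n : ℝ≥0∞)
          simp
      rw [hset]
      refine (hS₀meas.inter (hVmeas (measurableSet_singleton _))).union
        (hS₀meas.compl.inter ?_)
      by_cases h0 : (0:ℝ≥0∞) = (n : ℝ≥0∞)
      · simp only [h0, Set.setOf_true]; exact MeasurableSet.univ
      · simp only [h0, Set.setOf_false]; exact MeasurableSet.empty
    exact hgen
  have hq'ae : ∀ᵐ γ ∂gh, q' γ = qmap γ := by
    filter_upwards [hS₀ae] with γ hγ
    simp [hq'def, if_pos hγ]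
  have hmp : MeasurePreserving q' gh gcl := by
    refine ⟨hq'meas, ?_⟩
    ext A hA
    rw [Measure.map_apply hq'meas hA, hgcl A hA]
    apply measure_congr
    refine ae_eq_set.2 ⟨?_, ?_⟩
    · refine measure_mono_null (fun γ hγ => ?_) hN₀null
      rcases hγ with ⟨h1, h2⟩
      by_contra hN
      have hγS : γ ∈ S₀ := hN
      exact h2 (show qmap γ ∈ A from (show q' γ = qmap γ from if_pos hγS) ▸ h1)
    · refine measure_mono_null (fun γ hγ => ?_) hN₀null
      rcases hγ with ⟨h1, h2⟩
      by_contra hN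
      have hγS : γ ∈ S₀ := hN
      exact h2 (show q' γ ∈ A from (show q' γ = qmap γ from if_pos hγS).symm ▸ h1)
  -- the sub-σ-algebra generated by q'
  have hm' : subAlg q' ≤ (inferInstance : MeasurableSpace (Config (Pt d × MarkSp (Pt d)))) :=
    hq'meas.comap_le
  haveI : SigmaFinite (gh.trim hm') := inferInstance
  -- the isometry Q
  set QQ := Lp.compMeasurePreserving (E := ℝ) (p := 1) q' hmp with hQQdef
  have hQinj : Function.Injective QQ := by
    intro F1 F2 hF
    have : QQ (F1 - F2) = 0 := by rw [map_sub, hF, sub_self]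
    have hnorm : ‖F1 - F2‖ = 0 := by
      rw [← Lp.norm_compMeasurePreserving (F1 - F2) hmp]
      show ‖QQ (F1 - F2)‖ = 0
      rw [this, norm_zero]
    rwa [norm_eq_zero, sub_eq_zero] at hnorm
  have hQsmul : ∀ (c : ℝ) (F : Lp ℝ 1 gcl), QQ (c • F) = c • QQ F := by
    intro c F
    apply Lp.ext
    have h1 : ⇑(QQ (c • F)) =ᵐ[gh] (⇑(c • F)) ∘ q' := Lp.coeFn_compMeasurePreserving _ hmp
    have h2 : (⇑(c • F)) ∘ q' =ᵐ[gh] (c • ⇑F) ∘ q' :=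
      hmp.quasiMeasurePreserving.ae_eq_comp (Lp.coeFn_smul c F)
    have h3 : ⇑(QQ F) =ᵐ[gh] ⇑F ∘ q' := Lp.coeFn_compMeasurePreserving _ hmp
    have h4 : ⇑(c • QQ F) =ᵐ[gh] c • ⇑(QQ F) := Lp.coeFn_smul c (QQ F)
    refine h1.trans (h2.trans ?_)
    refine (h4.trans ?_).symm
    filter_upwards [h3] with γ hγ
    simp [hγ]
  -- membership of conditional expectations in the range of Q
  have hmem : ∀ G : Lp ℝ 1 gh, ∃ FF : Lp ℝ 1 gcl, QQ FF = condExpL1CLM ℝ hm' gh G := by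
    intro G
    have hGi : Integrable (⇑G) gh := L1.integrable_coeFn G
    have hc_meas : StronglyMeasurable[subAlg q'] (gh[⇑G | subAlg q']) :=
      stronglyMeasurable_condExp
    obtain ⟨F₀, hF₀m, hF₀eq⟩ := dd_factor q' hc_meas
    have hcomp : F₀ ∘ q' = gh[⇑G | subAlg q'] := funext hF₀eq
    have hF₀int : Integrable F₀ gcl := by
      rw [← hmp.map_eq]
      rw [integrable_map_measure hF₀m.aestronglyMeasurable hq'meas.aemeasurable]
      show Integrable (F₀ ∘ q') gh
      rw [hcomp]
      exact integrable_condExp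
    refine ⟨hF₀int.toL1 F₀, Lp.ext ?_⟩
    have e1 : ⇑(QQ (hF₀int.toL1 F₀)) =ᵐ[gh] (⇑(hF₀int.toL1 F₀)) ∘ q' :=
      Lp.coeFn_compMeasurePreserving _ hmp
    have e2 : (⇑(hF₀int.toL1 F₀)) ∘ q' =ᵐ[gh] F₀ ∘ q' :=
      hmp.quasiMeasurePreserving.ae_eq_comp (hF₀int.coeFn_toL1)
    have e3 : gh[⇑G | subAlg q'] =ᵐ[gh] ⇑(condExpL1CLM ℝ hm' gh G) := by
      have h5 := condExp_ae_eq_condExpL1CLM hm' hGi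
      rwa [Integrable.toL1_coeFn] at h5
    exact e1.trans (e2.trans (hcomp ▸ e3))
  choose TF hTF using hmem
  have hadd : ∀ G₁ G₂ : Lp ℝ 1 gh, TF (G₁ + G₂) = TF G₁ + TF G₂ := by
    intro G₁ G₂
    apply hQinj
    rw [map_add, hTF, hTF, hTF, map_add]
  have hsmul : ∀ (c : ℝ) (G : Lp ℝ 1 gh), TF (c • G) = c • TF G := by
    intro c G
    apply hQinj
    rw [hQsmul, hTF, hTF, _root_.map_smul]
  set Tlin : Lp ℝ 1 gh →ₗ[ℝ] Lp ℝ 1 gcl :=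
    { toFun := TF, map_add' := hadd, map_smul' := hsmul } with hTlin
  have hbound : ∀ G : Lp ℝ 1 gh, ‖Tlin G‖ ≤ ‖condExpL1CLM ℝ hm' gh‖ * ‖G‖ := by
    intro G
    have h6 : ‖TF G‖ = ‖QQ (TF G)‖ := (Lp.norm_compMeasurePreserving (TF G) hmp).symm
    show ‖TF G‖ ≤ _
    rw [h6, hTF]
    exact (condExpL1CLM ℝ hm' gh).le_opNorm G
  refine ⟨Tlin.mkContinuous _ hbound, ?_⟩
  intro G F hFmeas hFbdd
  obtain ⟨Cb, hCb⟩ := hFbdd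
  have hGi : Integrable (⇑G) gh := L1.integrable_coeFn G
  -- the pulled-back multiplier
  set φ : Config (Pt d × MarkSp (Pt d)) → ℝ := fun γ => F (q' γ) with hφdef
  have hφm' : StronglyMeasurable[subAlg q'] φ :=
    (hFmeas.comp (comap_measurable q')).stronglyMeasurable
  have hφG_int : Integrable (φ * ⇑G) gh := by
    refine hGi.bdd_mul (c := Cb) ((hφm'.mono hm').aestronglyMeasurable) (Filter.Eventually.of_forall fun γ => ?_)
    rw [Real.norm_eq_abs]
    exact hCb _
  -- key conditional expectation facts
  have h2 : (⇑(TF G)) ∘ q' =ᵐ[gh] gh[⇑G | subAlg q'] := by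
    have e1 : ⇑(QQ (TF G)) =ᵐ[gh] (⇑(TF G)) ∘ q' := Lp.coeFn_compMeasurePreserving _ hmp
    have e3 : gh[⇑G | subAlg q'] =ᵐ[gh] ⇑(condExpL1CLM ℝ hm' gh G) := by
      have h5 := condExp_ae_eq_condExpL1CLM hm' hGi
      rwa [Integrable.toL1_coeFn] at h5
    refine e1.symm.trans ?_
    rw [hTF]
    exact e3.symm
  -- step 1 : transport the integral to gh
  have hTG_aesm : AEStronglyMeasurable (fun γ : Config (Pt d) => (⇑(TF G)) γ * F γ)
      (Measure.map q' gh) := by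
    rw [hmp.map_eq]
    exact (Lp.aestronglyMeasurable (TF G)).mul hFmeas.stronglyMeasurable.aestronglyMeasurable
  have step1 : ∫ γ, (⇑(TF G)) γ * F γ ∂gcl = ∫ γh, (⇑(TF G)) (q' γh) * F (q' γh) ∂gh := by
    have e := integral_map (φ := q') hq'meas.aemeasurable hTG_aesm
    rwa [hmp.map_eq] at e
  have step2 : ∫ γh, (⇑(TF G)) (q' γh) * F (q' γh) ∂gh
      = ∫ γh, φ γh * (gh[⇑G | subAlg q']) γh ∂gh := by
    apply integral_congr_ae
    filter_upwards [h2] with γh hγh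
    show (⇑(TF G) ∘ q') γh * F (q' γh) = _
    rw [hγh, mul_comm]
  have step3 : ∫ γh, φ γh * (gh[⇑G | subAlg q']) γh ∂gh = ∫ γh, φ γh * (⇑G) γh ∂gh := by
    have hmul := condExp_mul_of_stronglyMeasurable_left hφm' hφG_int hGi
    have : ∫ γh, φ γh * (gh[⇑G | subAlg q']) γh ∂gh = ∫ γh, (gh[φ * ⇑G | subAlg q']) γh ∂gh :=
      (integral_congr_ae hmul).symm
    rw [this, integral_condExp hm']
    rfl
  have step4 : ∫ γh, φ γh * (⇑G) γh ∂gh = ∫ γh, (⇑G) γh * F (qmap γh) ∂gh := by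
    apply integral_congr_ae
    filter_upwards [hq'ae] with γh hγh
    rw [hφdef]
    show F (q' γh) * (⇑G) γh = _
    rw [hγh, mul_comm]
  show ∫ γ, (⇑(TF G)) γ * F γ ∂gcl = ∫ γh, (⇑G) γh * F (qmap γh) ∂gh
  rw [step1, step2, step3, step4]

end
end
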